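/- Fix κ ∈ (−1/2, 0). For any q ∈ ℝ and any u ∈ C¹(𝒞), the following pointwise inequality holds on 𝒞: y^{q−1} (D_r u)² ≥ (1/4)(2κ + q − 2)² y^{q−3} u² − (n−1)(κ + (q−2)/2) y^{q−2} r^{−1} u² − ∇^β[ (κ + (q−2)/2) y^{q−2} ∇_β y · u² ], where the last term is the (Minkowski) divergence of the spacetime vector field with components (κ + (q−2)/2) y^{q−2} ∇^β y · u². -/

import Mathlib

open MeasureTheory Real Filter

noncomputable section

namespace CarlemanWave

/-- Euclidean space `ℝⁿ`. -/
abbrev Spc (n : ℕ) : Type := EuclideanSpace ℝ (Fin n)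

variable {n : ℕ}

/-- The `i`-th standard basis vector. -/
def esingle (n : ℕ) (i : Fin n) : Spc n := EuclideanSpace.single i 1

/-- Time derivative `∂ₜ u`. -/
def pdt (u : ℝ → Spc n → ℝ) (t : ℝ) (x : Spc n) : ℝ := deriv (fun s => u s x) t

/-- Spatial partial derivative `∂ᵢ u`. -/
def pdx (u : ℝ → Spc n → ℝ) (i : Fin n) (t : ℝ) (x : Spc n) : ℝ :=
  fderiv ℝ (fun z => u t z) x (esingle n i)

/-- Radial derivative `∂ᵣ u`. -/
def pdr (u : ℝ → Spc n → ℝ) (t : ℝ) (x : Spc n) : ℝ :=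
  fderiv ℝ (fun z => u t z) x (‖x‖⁻¹ • x)

/-- Spatial Laplacian. -/
def lap (u : ℝ → Spc n → ℝ) (t : ℝ) (x : Spc n) : ℝ :=
  ∑ i, pdx (fun s z => pdx u i s z) i t x

/-- Wave operator `□ = −∂ₜₜ + Δ`. -/
def waveOp (u : ℝ → Spc n → ℝ) (t : ℝ) (x : Spc n) : ℝ :=
  - pdt (fun s z => pdt u s z) t x + lap u t x

/-- Singular wave operator `□_κ = □ + κ(1−κ)/(1−|x|)²`. -/
def boxKappa (κ : ℝ) (u : ℝ → Spc n → ℝ) (t : ℝ) (x : Spc n) : ℝ :=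
  waveOp u t x + κ * (1 - κ) / (1 - ‖x‖)^2 * u t x

/-- Twisted spatial derivative `Dᵢu = ∂ᵢu − (κ/y)∂ᵢy · u`, where `y = 1 − |x|`
and `∂ᵢ y = −xᵢ/r`. -/
def Dx (κ : ℝ) (u : ℝ → Spc n → ℝ) (i : Fin n) (t : ℝ) (x : Spc n) : ℝ :=
  pdx u i t x + (κ / (1 - ‖x‖)) * (x i / ‖x‖) * u t x

/-- Twisted radial derivative `Dᵣu = ∂ᵣu + (κ/y)u`. -/
def Dr (κ : ℝ) (u : ℝ → Spc n → ℝ) (t : ℝ) (x : Spc n) : ℝ :=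
  pdr u t x + (κ / (1 - ‖x‖)) * u t x

/-- Conjugate twisted radial derivative `D̄ᵣu = ∂ᵣu − (κ/y)u`. -/
def Dbr (κ : ℝ) (u : ℝ → Spc n → ℝ) (t : ℝ) (x : Spc n) : ℝ :=
  pdr u t x - (κ / (1 - ‖x‖)) * u t x

/-- Twisted wave operator `□_y = g^{αβ} D̄_α D_β` (Minkowski metric,
Cartesian coordinates). -/
def boxY (κ : ℝ) (u : ℝ → Spc n → ℝ) (t : ℝ) (x : Spc n) : ℝ :=
  - pdt (fun s z => pdt u s z) t x
    + ∑ i, (pdx (fun s z => Dx κ u i s z) i t x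
        - (κ / (1 - ‖x‖)) * (x i / ‖x‖) * Dx κ u i t x)

/-- Squared norm of the spatial gradient. -/
def gradSq (u : ℝ → Spc n → ℝ) (t : ℝ) (x : Spc n) : ℝ := ∑ i, (pdx u i t x)^2

/-- Squared norm of the angular gradient `|∇̸u|²`. -/
def angSq (u : ℝ → Spc n → ℝ) (t : ℝ) (x : Spc n) : ℝ := gradSq u t x - (pdr u t x)^2

/-- Minkowski contraction `D_β u D^β u`. -/
def DD (κ : ℝ) (u : ℝ → Spc n → ℝ) (t : ℝ) (x : Spc n) : ℝ :=
  -(pdt u t x)^2 + ∑ i, (Dx κ u i t x)^2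

/-- The `i`-th Cartesian component of the angular gradient `∇̸u`. -/
def angComp (u : ℝ → Spc n → ℝ) (i : Fin n) (t : ℝ) (x : Spc n) : ℝ :=
  pdx u i t x - (x i / ‖x‖) * pdr u t x

/-- `w_{f,z} = ½(□f + (2κ/y)∇_α y ∇^α f) + z`; here `∇_α y ∇^α f = −∂ᵣ f`. -/
def wfz (κ : ℝ) (f : ℝ → Spc n → ℝ) (z : ℝ) (t : ℝ) (x : Spc n) : ℝ :=
  (1/2) * (waveOp f t x - (2*κ / (1 - ‖x‖)) * pdr f t x) + z

/-- `𝒜_{f,z} = −½(□w_{f,z} + (2κ/y)∇_α y ∇^α w_{f,z})`. -/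
def Afz (κ : ℝ) (f : ℝ → Spc n → ℝ) (z : ℝ) (t : ℝ) (x : Spc n) : ℝ :=
  -(1/2) * (waveOp (wfz κ f z) t x - (2*κ / (1 - ‖x‖)) * pdr (wfz κ f z) t x)

/-- Multiplier `S_{f,z}u = ∇^α f D_α u + w_{f,z} u`. -/
def Sfz (κ : ℝ) (f : ℝ → Spc n → ℝ) (z : ℝ) (u : ℝ → Spc n → ℝ) (t : ℝ) (x : Spc n) : ℝ :=
  - pdt f t x * pdt u t x + (∑ i, pdx f i t x * Dx κ u i t x) + wfz κ f z t x * u t x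

/-- Hessian contraction `∇^{αβ} f D_α u D_β u`. -/
def hessQ (κ : ℝ) (f : ℝ → Spc n → ℝ) (u : ℝ → Spc n → ℝ) (t : ℝ) (x : Spc n) : ℝ :=
  pdt (fun s z => pdt f s z) t x * (pdt u t x)^2
    - 2 * ∑ i, pdt (fun s z => pdx f i s z) t x * pdt u t x * Dx κ u i t x
    + ∑ i, ∑ j, pdx (fun s z => pdx f j s z) i t x * Dx κ u i t x * Dx κ u j t x

/-- The Carleman weight `f = −y^{1+2κ}/(1+2κ) − c t²`. -/
def fC (κ c : ℝ) (t : ℝ) (x : Spc n) : ℝ :=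
  -(1 - ‖x‖) ^ (1 + 2*κ) / (1 + 2*κ) - c * t^2

/-- The weight `f_q = −y^{1+q}/(1+q)`. -/
def fQ (q : ℝ) (_t : ℝ) (x : Spc n) : ℝ := -(1 - ‖x‖) ^ (1 + q) / (1 + q)

/-- Integral over the sphere of radius `ρ` with respect to the
`(n−1)`-dimensional Hausdorff measure. -/
def sphInt {n : ℕ} (ρ : ℝ) (F : Spc n → ℝ) : ℝ :=
  ∫ ω in Metric.sphere (0 : Spc n) ρ, F ω ∂μH[(n : ℝ) - 1]

/-- Lateral boundary integral over `(−T,T) × {r = ρ}`. -/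
def bdryInt {n : ℕ} (T ρ : ℝ) (F : ℝ → Spc n → ℝ) : ℝ :=
  ∫ t in Set.Ioo (-T) T, sphInt ρ (F t)

/-- Integral over the cylinder `(−T,T) × B₁`. -/
def cylInt {n : ℕ} (T : ℝ) (F : ℝ → Spc n → ℝ) : ℝ :=
  ∫ t in Set.Ioo (-T) T, ∫ x in Metric.ball (0 : Spc n) 1, F t x

/-- Integral over `𝒞_ε = (−T,T) × {ε < r < 1−ε}`. -/
def annInt {n : ℕ} (T ε : ℝ) (F : ℝ → Spc n → ℝ) : ℝ :=
  ∫ t in Set.Ioo (-T) T, ∫ x in {z : Spc n | ε < ‖z‖ ∧ ‖z‖ < 1 - ε}, F t x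

/-- Signed lateral boundary integral over `Γ_ε`; the first argument of `F`
records the orientation `s` of the outward normal `ν = s ∂ᵣ` (so `s = 1` on
the outer boundary `r = 1 − ε` and `s = −1` on the inner boundary `r = ε`). -/
def bdrySigned {n : ℕ} (T ε : ℝ) (F : ℝ → ℝ → Spc n → ℝ) : ℝ :=
  bdryInt T (1 - ε) (F 1) + bdryInt T ε (F (-1))

/-- `L²`-limit, as the boundary distance `h ↘ 0`, of a one-parameter family of
functions on `(−T,T) × 𝕊^{n−1}`. -/
def L2BdryLimit (n : ℕ) (T : ℝ) (g : ℝ → ℝ → Spc n → ℝ) (w : ℝ → Spc n → ℝ) : Prop :=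
  Tendsto (fun h : ℝ => bdryInt T 1 (fun t ω => (g h t ω - w t ω)^2))
    (nhdsWithin 0 (Set.Ioi 0)) (nhds 0)

/-- The Dirichlet trace `𝒟_κ u = lim_{r↗1} y^{−κ} u`, in the `L²` sense. -/
def HasDirichletTrace (n : ℕ) (T κ : ℝ) (u w : ℝ → Spc n → ℝ) : Prop :=
  L2BdryLimit n T (fun h t ω => h ^ (-κ) * u t ((1 - h) • ω)) w

/-- The Neumann trace `𝒩_κ u = lim_{r↗1} y^{2κ} ∂ᵣ(y^{−κ}u)`, in the `L²` sense. -/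
def HasNeumannTrace (n : ℕ) (T κ : ℝ) (u N : ℝ → Spc n → ℝ) : Prop :=
  L2BdryLimit n T
    (fun h t ω => h ^ (2*κ) *
      fderiv ℝ (fun z : Spc n => (1 - ‖z‖) ^ (-κ) * u t z) ((1 - h) • ω) ω) N

/-- Square integrability (finiteness) of a function on the lateral boundary
`(−T,T) × 𝕊^{n−1}`. -/
def FiniteOnBdry (n : ℕ) (T : ℝ) (N : ℝ → Spc n → ℝ) : Prop :=
  (∫⁻ t in Set.Ioo (-T) T,
      ∫⁻ ω in Metric.sphere (0 : Spc n) 1, ENNReal.ofReal ((N t ω)^2) ∂μH[(n : ℝ) - 1]) < ⊤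

/-- Boundary admissibility (Definition 2.2): the Neumann trace `N` exists and is
finite, and the two Dirichlet limits `(1−2κ)𝒟_κ(y^{−1+2κ}u) = −𝒩_κ u` and
`𝒟_κ(y^{2κ}∂ₜu) = 0` hold in the `L²` sense. -/
def BoundaryAdmissible (n : ℕ) (T κ : ℝ) (u N : ℝ → Spc n → ℝ) : Prop :=
  HasNeumannTrace n T κ u N ∧ FiniteOnBdry n T N ∧
  L2BdryLimit n T (fun h t ω => (1 - 2*κ) * (h ^ (κ - 1) * u t ((1 - h) • ω)))
    (fun t ω => -(N t ω)) ∧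
  L2BdryLimit n T (fun h t ω => h ^ κ * deriv (fun s => u s ((1 - h) • ω)) t)
    (fun _ _ => 0)

/-- Twisted `H¹` energy density. -/
def E1d (κ : ℝ) (u : ℝ → Spc n → ℝ) (t : ℝ) (x : Spc n) : ℝ :=
  (pdt u t x)^2 + (Dr κ u t x)^2 + angSq u t x + (u t x)^2

/-- Twisted `H¹` energy `E₁[u](τ)`. -/
def E1 (κ : ℝ) (u : ℝ → Spc n → ℝ) (τ : ℝ) : ℝ :=
  ∫ x in Metric.ball (0 : Spc n) 1, E1d κ u τ x

/-- Conjugate twisted `H¹` energy density (with `D̄ᵣ`). -/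
def E1dBar (κ : ℝ) (u : ℝ → Spc n → ℝ) (t : ℝ) (x : Spc n) : ℝ :=
  (pdt u t x)^2 + (Dbr κ u t x)^2 + angSq u t x + (u t x)^2

/-- Twisted `H²` energy density:
`Ē₁[Dᵣu] + E₁[∂ₜu] + E₁[∇̸u] + E₁[u]`. -/
def E2d (κ : ℝ) (u : ℝ → Spc n → ℝ) (t : ℝ) (x : Spc n) : ℝ :=
  E1dBar κ (Dr κ u) t x + E1d κ (fun s z => pdt u s z) t x
    + (∑ i, E1d κ (angComp u i) t x) + E1d κ u t x

/-- Twisted `H²` energy `E₂[u](τ)`. -/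
def E2 (κ : ℝ) (u : ℝ → Spc n → ℝ) (τ : ℝ) : ℝ :=
  ∫ x in Metric.ball (0 : Spc n) 1, E2d κ u τ x

/-- Twisted derivative along a spacetime vector field: `D_X u = X^α D_α u`. -/
def DtwX (κ : ℝ) (X : ℝ × Spc n → ℝ × Spc n) (u : ℝ → Spc n → ℝ) (t : ℝ) (x : Spc n) : ℝ :=
  (X (t, x)).1 * pdt u t x + ∑ i, (X (t, x)).2 i * Dx κ u i t x

/-- Smoothness on the open cylinder `𝒞 = (−T,T) × B₁`. -/
def SmoothOnCyl (n : ℕ) (T : ℝ) (u : ℝ → Spc n → ℝ) : Prop :=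
  ContDiffOn ℝ (⊤ : ℕ∞) (fun p : ℝ × Spc n => u p.1 p.2)
    (Set.Ioo (-T) T ×ˢ Metric.ball (0 : Spc n) 1)

/-- The admissibility conditions on the constant `c` in the Carleman weight. -/
def cAdmissible (n : ℕ) (κ T c : ℝ) : Prop :=
  0 < c ∧ c < 1/5 ∧
    (4 ≤ n → c ≤ 1 / (4 * Real.sqrt 3 * T)) ∧
    (n = 3 → c ≤ min (1 / (4 * Real.sqrt 15 * T)) (|κ| / 120)) ∧
    (n = 1 → c ≤ 1 / (4 * Real.sqrt 15 * T))
end CarlemanWave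

/-!
Write `y = 1 - r` and `c = κ + (q - 2)/2`. The last term of the inequality is the Euclidean
divergence of the radial field `c y^{q-2} u² x/r`, namely
`∂ᵣ(c y^{q-2} u²) + (n - 1) r⁻¹ c y^{q-2} u²`, whose second part cancels the `(n - 1)` term.
Expanding `y^{q-1} (∂ᵣu + κ u / y)²` then shows that the difference of the two sides is the
perfect square `y^{q-3} (y ∂ᵣu - (q - 2)/2 · u)²`.
-/

section NormCalculus

variable {E : Type*} [NormedAddCommGroup E] [InnerProductSpace ℝ E] {x : E}

theorem hasFDerivAt_norm_of_ne_zero (hx : x ≠ 0) :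
    HasFDerivAt (‖·‖) (‖x‖⁻¹ • innerSL ℝ x) x := by
  have h := (hasStrictFDerivAt_norm_sq x).hasFDerivAt.sqrt (by positivity : ‖x‖ ^ 2 ≠ 0)
  simp only [Real.sqrt_sq (norm_nonneg _)] at h
  convert h using 1
  ext v
  simp only [smul_apply, coe_innerSL_apply, smul_eq_mul, one_div, mul_inv_rev, nsmul_eq_mul,
    Nat.cast_ofNat]
  field_simp

theorem fderiv_one_sub_norm_rpow_mul_sq_apply_radial {w : E → ℝ} (hw : DifferentiableAt ℝ w x)
    (hx : x ≠ 0) (hx1 : ‖x‖ ≠ 1) (p : ℝ) :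
    fderiv ℝ (fun z => (1 - ‖z‖) ^ p * w z ^ 2) x (‖x‖⁻¹ • x)
      = -p * (1 - ‖x‖) ^ (p - 1) * w x ^ 2
        + 2 * (1 - ‖x‖) ^ p * w x * fderiv ℝ w x (‖x‖⁻¹ • x) := by
  have hr : ‖x‖ ≠ 0 := norm_ne_zero_iff.mpr hx
  have hy : 1 - ‖x‖ ≠ 0 := sub_ne_zero.mpr hx1.symm
  have h : HasFDerivAt (fun z => (1 - ‖z‖) ^ p * w z ^ 2) _ x :=
    (((hasFDerivAt_norm_of_ne_zero hx).const_sub 1).rpow_const (p := p) (Or.inl hy)).mul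
      (hw.hasFDerivAt.pow 2)
  rw [h.fderiv]
  simp only [Nat.add_one_sub_one, pow_one, nsmul_eq_mul, Nat.cast_ofNat, smul_neg, map_smul,
    add_apply, smul_apply, smul_eq_mul, neg_apply, coe_innerSL_apply, real_inner_self_eq_norm_sq]
  field_simp
  ring

end NormCalculus

section Divergence

variable {ι : Type*} [Fintype ι] [DecidableEq ι] {x : EuclideanSpace ℝ ι}

theorem EuclideanSpace.sum_mul_apply_single (L : EuclideanSpace ℝ ι →L[ℝ] ℝ)
    (x : EuclideanSpace ℝ ι) : ∑ i, x i * L (EuclideanSpace.single i 1) = L x := by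
  conv_rhs => rw [← (EuclideanSpace.basisFun ι ℝ).sum_repr x]
  simp [map_sum]

theorem fderiv_coord_div_norm_apply_single (hx : x ≠ 0) (i : ι) :
    fderiv ℝ (fun z : EuclideanSpace ℝ ι => z i / ‖z‖) x (EuclideanSpace.single i 1)
      = ‖x‖⁻¹ - x i ^ 2 / ‖x‖ ^ 3 := by
  have hr : ‖x‖ ≠ 0 := norm_ne_zero_iff.mpr hx
  have hcoord : HasFDerivAt (fun z : EuclideanSpace ℝ ι => z i)
      (EuclideanSpace.proj i : EuclideanSpace ℝ ι →L[ℝ] ℝ) x :=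
    (EuclideanSpace.proj i : EuclideanSpace ℝ ι →L[ℝ] ℝ).hasFDerivAt (x := x)
  have h :=
    hcoord.fun_mul ((hasDerivAt_inv hr).comp_hasFDerivAt x (hasFDerivAt_norm_of_ne_zero hx))
  simp only [Function.comp_def, ← div_eq_mul_inv] at h
  rw [h.fderiv]
  simp only [add_apply, smul_apply, coe_innerSL_apply,
    EuclideanSpace.inner_single_right, PiLp.proj_apply, PiLp.single_eq_same, smul_eq_mul, one_mul,
    mul_one, conj_trivial]
  field_simp
  ring

theorem sum_fderiv_coord_div_norm_apply_single (hx : x ≠ 0) :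
    ∑ i, fderiv ℝ (fun z : EuclideanSpace ℝ ι => z i / ‖z‖) x (EuclideanSpace.single i 1)
      = (Fintype.card ι - 1) / ‖x‖ := by
  have hr : ‖x‖ ≠ 0 := norm_ne_zero_iff.mpr hx
  simp only [fderiv_coord_div_norm_apply_single hx, Finset.sum_sub_distrib, ← Finset.sum_div,
    ← EuclideanSpace.real_norm_sq_eq, Finset.sum_const, Finset.card_univ, nsmul_eq_mul]
  field_simp

theorem sum_fderiv_mul_coord_div_norm_apply_single {φ : EuclideanSpace ℝ ι → ℝ}
    (hφ : DifferentiableAt ℝ φ x) (hx : x ≠ 0) :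
    ∑ i, fderiv ℝ (fun z => φ z * (z i / ‖z‖)) x (EuclideanSpace.single i 1)
      = fderiv ℝ φ x (‖x‖⁻¹ • x) + (Fintype.card ι - 1) / ‖x‖ * φ x := by
  have hcoord (i : ι) : DifferentiableAt ℝ (fun z : EuclideanSpace ℝ ι => z i / ‖z‖) x :=
    (EuclideanSpace.proj i : EuclideanSpace ℝ ι →L[ℝ] ℝ).differentiableAt.mul
      ((hasFDerivAt_norm_of_ne_zero hx).differentiableAt.inv (norm_ne_zero_iff.mpr hx))
  have hradial : ∑ i, x i / ‖x‖ * fderiv ℝ φ x (EuclideanSpace.single i 1)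
      = fderiv ℝ φ x (‖x‖⁻¹ • x) := by
    rw [map_smul, ← EuclideanSpace.sum_mul_apply_single, smul_eq_mul, Finset.mul_sum]
    exact Finset.sum_congr rfl fun i _ => by ring
  simp only [fderiv_fun_mul hφ (hcoord _), add_apply, smul_apply, smul_eq_mul,
    Finset.sum_add_distrib, ← Finset.mul_sum, sum_fderiv_coord_div_norm_apply_single hx, hradial]
  ring

end Divergence

namespace CarlemanWave

theorem hardy_square_completion {y : ℝ} (hy : 0 < y) (κ q p v : ℝ) :
    y ^ (q - 1) * (p + κ / y * v) ^ 2
      = (1/4) * (2*κ + q - 2)^2 * y ^ (q - 3) * v ^ 2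
        + (κ + (q - 2)/2) * (-(q - 2) * y ^ (q - 2 - 1) * v ^ 2 + 2 * y ^ (q - 2) * v * p)
        + y ^ (q - 3) * (y * p - (q - 2)/2 * v) ^ 2 := by
  have hpow (k : ℕ) : y ^ (q - 3 + k) = y ^ (q - 3) * y ^ k := by
    rw [rpow_add hy, rpow_natCast]
  rw [show q - 1 = q - 3 + (2 : ℕ) by push_cast; ring, show q - 2 - 1 = q - 3 by ring,
    show q - 2 = q - 3 + (1 : ℕ) by push_cast; ring, hpow, hpow]
  field_simp
  ring

theorem pointwise_hardy_general
    (n : ℕ) (κ : ℝ)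
    (T : ℝ) (q : ℝ)
    (u : ℝ → Spc n → ℝ)
    (hu : ContDiffOn ℝ 1 (fun p : ℝ × Spc n => u p.1 p.2)
      (Set.Ioo (-T) T ×ˢ Metric.ball (0 : Spc n) 1)) :
    ∀ t ∈ Set.Ioo (-T) T, ∀ x : Spc n, ‖x‖ < 1 → x ≠ 0 →
      (1 - ‖x‖) ^ (q - 1) * (Dr κ u t x)^2 ≥
        (1/4) * (2*κ + q - 2)^2 * (1 - ‖x‖) ^ (q - 3) * (u t x)^2
        - ((n : ℝ) - 1) * (κ + (q - 2)/2) * (1 - ‖x‖) ^ (q - 2) * ‖x‖⁻¹ * (u t x)^2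
        - (∑ i, fderiv ℝ
            (fun z : Spc n => (κ + (q - 2)/2) * (1 - ‖z‖) ^ (q - 2) * (-(z i / ‖z‖)) * (u t z)^2)
            x (esingle n i)) := by
  intro t ht x hx1 hx0
  have hslice : DifferentiableAt ℝ (fun z : Spc n => (t, z)) x :=
    (differentiableAt_const t).prodMk differentiableAt_id
  have hw : DifferentiableAt ℝ (fun z => u t z) x :=
    ((hu.contDiffAt ((isOpen_Ioo.prod Metric.isOpen_ball).mem_nhds
        (Set.mk_mem_prod ht (mem_ball_zero_iff.mpr hx1)))).differentiableAt one_ne_zero).comp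
      x hslice
  have hy : 0 < 1 - ‖x‖ := by linarith
  have hg : DifferentiableAt ℝ (fun z => (1 - ‖z‖) ^ (q - 2) * u t z ^ 2) x :=
    ((differentiableAt_id.norm ℝ hx0).const_sub 1 |>.rpow_const (Or.inl hy.ne')).mul (hw.pow 2)
  have hflux (i : Fin n) :
      (fun z : Spc n => (κ + (q - 2)/2) * (1 - ‖z‖) ^ (q - 2) * (-(z i / ‖z‖)) * (u t z)^2)
        = fun z => -((κ + (q - 2)/2) * ((1 - ‖z‖) ^ (q - 2) * u t z ^ 2) * (z i / ‖z‖)) := by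
    funext z; ring
  simp only [hflux, fderiv_fun_neg, neg_apply, Finset.sum_neg_distrib, esingle,
    sum_fderiv_mul_coord_div_norm_apply_single (hg.const_mul (κ + (q - 2)/2)) hx0,
    fderiv_const_mul hg, smul_apply, smul_eq_mul,
    fderiv_one_sub_norm_rpow_mul_sq_apply_radial hw hx0 hx1.ne, Fintype.card_fin]
  rw [Dr, pdr, hardy_square_completion hy]
  have hsq := mul_nonneg (rpow_nonneg hy.le (q - 3))
    (sq_nonneg ((1 - ‖x‖) * fderiv ℝ (fun z => u t z) x (‖x‖⁻¹ • x) - (q - 2)/2 * u t x))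
  linear_combination hsq

/-- the pointwise Hardy inequality (Proposition 2.1). -/
theorem pointwise_hardy
    (n : ℕ) (κ : ℝ) (hκ1 : -(1/2 : ℝ) < κ) (hκ2 : κ < 0)
    (T : ℝ) (hT : 0 < T) (q : ℝ)
    (u : ℝ → Spc n → ℝ)
    (hu : ContDiffOn ℝ 1 (fun p : ℝ × Spc n => u p.1 p.2)
      (Set.Ioo (-T) T ×ˢ Metric.ball (0 : Spc n) 1)) :
    ∀ t ∈ Set.Ioo (-T) T, ∀ x : Spc n, ‖x‖ < 1 → x ≠ 0 →
      (1 - ‖x‖) ^ (q - 1) * (Dr κ u t x)^2 ≥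
        (1/4) * (2*κ + q - 2)^2 * (1 - ‖x‖) ^ (q - 3) * (u t x)^2
        - ((n : ℝ) - 1) * (κ + (q - 2)/2) * (1 - ‖x‖) ^ (q - 2) * ‖x‖⁻¹ * (u t x)^2
        - (∑ i, fderiv ℝ
            (fun z : Spc n => (κ + (q - 2)/2) * (1 - ‖z‖) ^ (q - 2) * (-(z i / ‖z‖)) * (u t z)^2)
            x (esingle n i)) :=
  pointwise_hardy_general n κ T q u hu

end CarlemanWave
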